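/- arXiv:1810.11754 — 4 statements merged into one kernel-verified Lean document; each statement's English description precedes it below -/
import Mathlib

section
/- Lemma 5 (exact probability of tail blocks in the prior construction): Fix an even integer k ≥ 2 and n > k, and let a = 1/n, b = 1 − (k−2)/n. Let M be the k×k transition matrix with M(i,i) = b−a for odd i, M(i,i) = b − p_i and M(i,i−1) = p_i for even i (where 0 < p_i ≤ b−a for each even i), and all remaining entries equal to a. Let the Markov chain have uniform initial distribution on [k]. For an even state i and 1 ≤ ℓ ≤ n−1, let K_ℓ(i) = { x^n ∈ [k]^n : x_t ≠ i for all t ≤ n−ℓ and x_t = i for all t > n−ℓ }. Then Pr(X^n ∈ K_ℓ(i)) = ((k−1)/k) · (1 − 1/n)^{n−ℓ−1} · (1/n) · (1 − (k−2)/n − p_i)^{ℓ−1}. -/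
/-!
A sequence in `K_ℓ(i)` is a path of length `n - ℓ` avoiding `i`, one step into `i`, and `ℓ - 1`
steps from `i` to itself. For an even state `i` the column `M(·, i)` equals `1/n` off the
diagonal, and every row sums to `1`, so from any state `j ≠ i` the chain avoids `i` at the next
step with probability exactly `1 - 1/n`. Hence the avoiding prefix has probability
`((k-1)/k) (1 - 1/n)^(n-ℓ-1)`, the entry into `i` contributes `1/n`, and the stay in `i`
contributes `M(i,i)^(ℓ-1)`.
-/

open Filter Finset
open scoped ENNReal Classical

noncomputable section

def IsProbVec {k : ℕ} (p : Fin k → ℝ) : Prop :=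
  (∀ i, 0 ≤ p i) ∧ ∑ i, p i = 1

def IsTransMat {k : ℕ} (M : Fin k → Fin k → ℝ) : Prop :=
  ∀ i, IsProbVec (M i)

def seqProb {k : ℕ} (n : ℕ) (μ : Fin k → ℝ) (M : Fin k → Fin k → ℝ)
    (x : Fin n → Fin k) : ℝ :=
  (if h : 0 < n then μ (x ⟨0, h⟩) else 1) *
    ∏ t : Fin (n - 1),
      M (x ⟨t.1, by have := t.2; omega⟩) (x ⟨t.1 + 1, by have := t.2; omega⟩)

/-- `x` consists of states different from `i` (in its 1-indexed positions `t ≤ n - ℓ`)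
followed by `ℓ` occurrences of the state `i`. -/
def IsTailSeq {k : ℕ} (n : ℕ) (x : Fin n → Fin k) (i : Fin k) (ℓ : ℕ) : Prop :=
  (∀ s : Fin n, s.1 < n - ℓ → x s ≠ i) ∧ (∀ s : Fin n, n - ℓ ≤ s.1 → x s = i)

theorem Fin.sum_univ_fun_snoc {α β : Type*} [Fintype α] [AddCommMonoid β] {m : ℕ}
    (f : (Fin (m + 1) → α) → β) :
    ∑ x, f x = ∑ y : Fin m → α, ∑ c, f (Fin.snoc y c) := by
  rw [← Fintype.sum_equiv (Fin.snocEquiv fun _ => α) _ _ fun _ => rfl,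
    Fintype.sum_prod_type_right]
  rfl

theorem Fin.sum_filter_init_last {α β : Type*} [Fintype α] [DecidableEq α] [AddCommMonoid β]
    {m : ℕ} (P : (Fin m → α) → Prop) [DecidablePred P] (Q : α → Prop) [DecidablePred Q]
    (f : (Fin (m + 1) → α) → β) :
    ∑ x ∈ univ.filter (fun x => P (Fin.init x) ∧ Q (x (Fin.last m))), f x =
      ∑ y ∈ univ.filter P, ∑ c ∈ univ.filter Q, f (Fin.snoc y c) := by
  rw [sum_filter, Fin.sum_univ_fun_snoc, sum_filter]
  refine sum_congr rfl fun y _ => ?_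
  by_cases hy : P y <;> simp [hy, sum_filter]

theorem isTailSeq_zero_iff {k n : ℕ} {x : Fin n → Fin k} {i : Fin k} :
    IsTailSeq n x i 0 ↔ ∀ s, x s ≠ i := by
  simp [IsTailSeq]

theorem isTailSeq_succ_iff {k m ℓ : ℕ} {x : Fin (m + 1) → Fin k} {i : Fin k} :
    IsTailSeq (m + 1) x i (ℓ + 1) ↔ IsTailSeq m (Fin.init x) i ℓ ∧ x (Fin.last m) = i := by
  simp only [IsTailSeq, Fin.forall_fin_succ', Fin.init, Fin.val_castSucc, Fin.val_last,
    Nat.add_sub_add_right]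
  constructor
  · rintro ⟨⟨hpre, -⟩, hsuf, hlast⟩
    exact ⟨⟨hpre, hsuf⟩, hlast (Nat.sub_le m ℓ)⟩
  · rintro ⟨⟨hpre, hsuf⟩, hlast⟩
    exact ⟨⟨hpre, fun h => absurd h (by omega)⟩, hsuf, fun _ => hlast⟩

section MarkovChain

variable {k : ℕ} (μ : Fin k → ℝ) (M : Fin k → Fin k → ℝ)

theorem seqProb_succ {m : ℕ} (x : Fin (m + 1) → Fin k) :
    seqProb (m + 1) μ M x = μ (x 0) * ∏ t : Fin m, M (x t.castSucc) (x t.succ) := by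
  simp only [seqProb, dif_pos (Nat.succ_pos _)]
  rfl

theorem seqProb_snoc {m : ℕ} (y : Fin (m + 1) → Fin k) (c : Fin k) :
    seqProb (m + 2) μ M (Fin.snoc y c) = seqProb (m + 1) μ M y * M (y (Fin.last m)) c := by
  rw [seqProb_succ, seqProb_succ, Fin.prod_univ_castSucc]
  simp only [Fin.succ_castSucc, Fin.snoc_castSucc, Fin.succ_last, Fin.snoc_last]
  rw [← Fin.castSucc_zero, Fin.snoc_castSucc, mul_assoc]

theorem sum_seqProb_forall_mem (S : Finset (Fin k)) {q : ℝ}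
    (hS : ∀ j ∈ S, ∑ c ∈ S, M j c = q) (m : ℕ) :
    ∑ y ∈ univ.filter (fun y : Fin (m + 1) → Fin k => ∀ t, y t ∈ S), seqProb (m + 1) μ M y =
      (∑ c ∈ S, μ c) * q ^ m := by
  induction m with
  | zero => 
    rw [sum_filter, Fin.sum_univ_fun_snoc]
    simp [seqProb_succ, Fin.snoc_zero, Finset.sum_ite_mem]
  | succ m ih =>
    have hsplit : ∀ x : Fin (m + 2) → Fin k,
        (∀ t, x t ∈ S) ↔ (∀ t, Fin.init x t ∈ S) ∧ x (Fin.last (m + 1)) ∈ S :=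
      fun x => Fin.forall_fin_succ'
    calc ∑ x ∈ univ.filter (fun x : Fin (m + 2) → Fin k => ∀ t, x t ∈ S), seqProb (m + 2) μ M x
        = ∑ y ∈ univ.filter (fun y : Fin (m + 1) → Fin k => ∀ t, y t ∈ S),
            ∑ c ∈ S, seqProb (m + 1) μ M y * M (y (Fin.last m)) c := by
          rw [filter_congr fun x _ => hsplit x,
            Fin.sum_filter_init_last (fun y => ∀ t, y t ∈ S) (· ∈ S),
            filter_mem_eq_inter, univ_inter]
          simp only [seqProb_snoc]
      _ = ∑ y ∈ univ.filter (fun y : Fin (m + 1) → Fin k => ∀ t, y t ∈ S),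
            seqProb (m + 1) μ M y * q :=
          sum_congr rfl fun y hy => by rw [← mul_sum, hS _ ((mem_filter.1 hy).2 _)]
      _ = (∑ c ∈ S, μ c) * q ^ (m + 1) := by rw [← sum_mul, ih, pow_succ, mul_assoc]

theorem sum_isTailSeq_succ (i : Fin k) (m ℓ : ℕ) :
    ∑ x ∈ univ.filter (fun x : Fin (m + 2) → Fin k => IsTailSeq (m + 2) x i (ℓ + 1)),
        seqProb (m + 2) μ M x =
      ∑ y ∈ univ.filter (fun y : Fin (m + 1) → Fin k => IsTailSeq (m + 1) y i ℓ),
        seqProb (m + 1) μ M y * M (y (Fin.last m)) i := by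
  rw [filter_congr fun x _ => isTailSeq_succ_iff,
    Fin.sum_filter_init_last (IsTailSeq (m + 1) · i ℓ) (· = i)]
  simp [filter_eq', seqProb_snoc]

theorem sum_isTailSeq (i : Fin k) {a q : ℝ} (hcol : ∀ j ≠ i, M j i = a)
    (hrow : ∀ j ≠ i, ∑ c ∈ univ.erase i, M j c = q) (m ℓ : ℕ) :
    ∑ x ∈ univ.filter (fun x : Fin (m + ℓ + 2) → Fin k => IsTailSeq (m + ℓ + 2) x i (ℓ + 1)),
        seqProb (m + ℓ + 2) μ M x =
      (∑ c ∈ univ.erase i, μ c) * q ^ m * a * M i i ^ ℓ := by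
  induction ℓ with
  | zero =>
    have hstay : ∀ j ∈ univ.erase i, ∑ c ∈ univ.erase i, M j c = q :=
      fun j hj => hrow j (ne_of_mem_erase hj)
    rw [sum_isTailSeq_succ]
    calc _ = ∑ y ∈ univ.filter (fun y : Fin (m + 1) → Fin k => ∀ t, y t ∈ univ.erase i),
          seqProb (m + 1) μ M y * a :=
          sum_congr (by ext; simp [isTailSeq_zero_iff]) fun y hy => by
            rw [hcol _ (ne_of_mem_erase ((mem_filter.1 hy).2 _))]
      _ = _ := by rw [← sum_mul, sum_seqProb_forall_mem μ M _ hstay, pow_zero, mul_one]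
  | succ ℓ ih =>
    rw [sum_isTailSeq_succ, sum_congr rfl fun y hy => by
      rw [(isTailSeq_succ_iff.1 (mem_filter.1 hy).2).2], ← sum_mul, pow_succ, ← mul_assoc]
    exact congrArg (· * M i i) ih

end MarkovChain

/-- The paper's `a = 1/n` and `b = 1 - (k-2)/n`; states are `0`-indexed, so its even states are
those with `Even (i.1 + 1)` and `M i ⟨i.1 - 1, _⟩` is the entry `M(i, i-1)`. -/
def IsPriorTransition (k n : ℕ) (p : Fin k → ℝ) (M : Fin k → Fin k → ℝ) : Prop :=
  (∀ i : Fin k, ¬ Even (i.1 + 1) →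
      M i i = (1 - ((k : ℝ) - 2) / n) - 1 / n ∧ ∀ j, j ≠ i → M i j = 1 / n) ∧
    (∀ i : Fin k, Even (i.1 + 1) →
      (0 < p i ∧ p i ≤ (1 - ((k : ℝ) - 2) / n) - 1 / n) ∧
      M i i = (1 - ((k : ℝ) - 2) / n) - p i ∧
      M i ⟨i.1 - 1, (Nat.sub_le _ _).trans_lt i.2⟩ = p i ∧
      ∀ j : Fin k, j ≠ i → j.1 ≠ i.1 - 1 → M i j = 1 / n)

namespace IsPriorTransition

variable {k n : ℕ} {p : Fin k → ℝ} {M : Fin k → Fin k → ℝ}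

theorem apply_of_ne (hM : IsPriorTransition k n p M) {i : Fin k} (hi : Even (i.1 + 1))
    {j : Fin k} (hj : j ≠ i) : M j i = 1 / n := by
  by_cases hj_even : Even (j.1 + 1)
  · refine (hM.2 j hj_even).2.2.2 i hj.symm ?_
    rw [Nat.even_iff] at hi hj_even
    omega
  · exact (hM.1 j hj_even).2 i hj.symm

theorem sum_row (hM : IsPriorTransition k n p M) (j : Fin k) : ∑ c, M j c = 1 := by
  have hsplit : ∑ c, M j c = k * (1 / n) + ∑ c, (M j c - 1 / n) := by
    simp [sum_sub_distrib]
  by_cases hj : Even (j.1 + 1)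
  · obtain ⟨-, hdiag, hsub, hoff⟩ := hM.2 j hj
    set j' : Fin k := ⟨j.1 - 1, (Nat.sub_le _ _).trans_lt j.2⟩
    have hj'j : j ≠ j' := by
      rw [Nat.even_iff] at hj
      rw [Ne, Fin.ext_iff]
      change ¬ j.1 = j.1 - 1
      omega
    rw [hsplit, Fintype.sum_eq_add j j' hj'j fun c hc => by
      rw [hoff c hc.1 fun h => hc.2 (Fin.ext h), sub_self], hdiag, hsub]
    ring
  · obtain ⟨hdiag, hoff⟩ := hM.1 j hj
    rw [hsplit, Fintype.sum_eq_single j fun c hc => by rw [hoff c hc, sub_self], hdiag]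
    ring

end IsPriorTransition

/-- Lemma 5: exact probability of the tail blocks `K_ℓ(i)` under the chains of the
prior construction (stated for 1-indexed even states `i`, i.e. `Even (i.1 + 1)`). -/
theorem tail_block_probability (k n : ℕ)
    (p : Fin k → ℝ) (M : Fin k → Fin k → ℝ)
    (hModd : ∀ i : Fin k, ¬ Even (i.1 + 1) →
      M i i = (1 - ((k : ℝ) - 2) / n) - 1 / n ∧ ∀ j, j ≠ i → M i j = 1 / n)
    (hMeven : ∀ i : Fin k, Even (i.1 + 1) →
      (0 < p i ∧ p i ≤ (1 - ((k : ℝ) - 2) / n) - 1 / n) ∧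
      M i i = (1 - ((k : ℝ) - 2) / n) - p i ∧
      M i ⟨i.1 - 1, by have := i.2; omega⟩ = p i ∧
      ∀ j : Fin k, j ≠ i → j.1 ≠ i.1 - 1 → M i j = 1 / n)
    (μ : Fin k → ℝ) (hμ : ∀ j, μ j = (k : ℝ)⁻¹)
    (i : Fin k) (hi : Even (i.1 + 1)) (ℓ : ℕ) (hℓ1 : 1 ≤ ℓ) (hℓn : ℓ ≤ n - 1) :
    ∑ x ∈ Finset.univ.filter (fun x : Fin n → Fin k => IsTailSeq n x i ℓ),
        seqProb n μ M x =
      (((k : ℝ) - 1) / k) * (1 - 1 / n) ^ (n - ℓ - 1) * (1 / n) *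
        (1 - ((k : ℝ) - 2) / n - p i) ^ (ℓ - 1) := by
  have hM : IsPriorTransition k n p M := ⟨hModd, hMeven⟩
  have hinit : ∑ c ∈ univ.erase i, μ c = ((k : ℝ) - 1) / k := by
    rw [sum_congr rfl fun c _ => hμ c, sum_const, card_erase_of_mem (mem_univ i), card_univ,
      Fintype.card_fin, nsmul_eq_mul, Nat.cast_pred (Fin.pos i), div_eq_mul_inv]
  have hleave : ∀ j ≠ i, ∑ c ∈ univ.erase i, M j c = 1 - 1 / n := fun j hj => by
    rw [sum_erase_eq_sub (mem_univ i), hM.sum_row, hM.apply_of_ne hi hj]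
  obtain ⟨ℓ, rfl⟩ : ∃ ℓ', ℓ = ℓ' + 1 := ⟨ℓ - 1, by omega⟩
  obtain ⟨m, rfl⟩ : ∃ m, n = m + ℓ + 2 := ⟨n - ℓ - 2, by omega⟩
  rw [sum_isTailSeq μ M i (fun j hj => hM.apply_of_ne hi hj) hleave, hinit, (hMeven i hi).2.1,
    show m + ℓ + 2 - (ℓ + 1) - 1 = m by omega, Nat.add_sub_cancel]
end
end

section
/- Lemma 6 (uniform hitting-probability bound): For any Markov chain over [k] started at state i (i.e., X_1 = i almost surely) with any transition matrix, any state j ∈ [k], and any integer n > k, the probability that the hitting time of j equals n satisfies Pr_i(τ(j) = n) ≤ k/n, where τ(j) = min{ t ≥ 1 : X_t = j }. -/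
open Finset
open scoped Classical

noncomputable section

/-!
Write `h_m(x) = Pr_x(τ(j) = m + 1)`. Away from `j`, `h_{m+1}(x)` is an `M`-average of `h_m`, so
`max_x h_m(x)` is nonincreasing in `m`; hence `h_N(i) ≤ ∑_x h_m(x)` for every `m ≤ N`. Summing over
`m ≤ N` gives `(N + 1) h_N(i) ≤ ∑_x ∑_{m ≤ N} h_m(x) ≤ k`, because for a fixed start `x` the events
`τ(j) = m + 1` are disjoint.
-/

section FirstHit

variable {ι : Type*} [Fintype ι] [DecidableEq ι]

/-- `firstHitProb M j m x = Pr_x(τ(j) = m + 1)`, by first-step analysis. -/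
def firstHitProb (M : ι → ι → ℝ) (j : ι) : ℕ → ι → ℝ
  | 0, x => if x = j then 1 else 0
  | m + 1, x => if x = j then 0 else ∑ y, M x y * firstHitProb M j m y

theorem sum_firstHitPaths_eq_firstHitProb (M : ι → ι → ℝ) (j : ι) (N : ℕ) (i : ι) :
    ∑ z ∈ univ.filter (fun z : Fin (N + 1) → ι =>
        z 0 = i ∧ (∀ s : Fin N, z s.castSucc ≠ j) ∧ z (Fin.last N) = j),
      ∏ t : Fin N, M (z t.castSucc) (z t.succ) = firstHitProb M j N i := by
  rw [sum_filter]
  induction N generalizing i with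
  | zero =>
    rw [firstHitProb, ← Fintype.sum_equiv (Equiv.funUnique (Fin 1) ι).symm _ _ fun _ => rfl]
    split_ifs with h
    · subst h; simp
    · simpa [filter_eq_empty_iff] using h
  | succ N ih =>
    rw [← Fintype.sum_equiv (Fin.consEquiv fun _ => ι) _ _ fun _ => rfl, Fintype.sum_prod_type]
    simp only [Fin.consEquiv_apply, Fin.cons_zero, Fin.forall_fin_succ, Fin.castSucc_zero,
      ← Fin.succ_castSucc, Fin.cons_succ, Fin.prod_univ_succ, ← Fin.succ_last, firstHitProb,
      ← ih, mul_sum, mul_ite, mul_zero]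
    rw [sum_comm]
    simp only [ite_and, sum_ite_eq', mem_univ, if_true]
    by_cases hij : i = j
    · simp [hij]
    · rw [sum_comm]
      simp [hij]

variable {M : ι → ι → ℝ} {j : ι}

theorem firstHitProb_nonneg (hM : ∀ x y, 0 ≤ M x y) (m : ℕ) (x : ι) :
    0 ≤ firstHitProb M j m x := by
  induction m generalizing x with
  | zero => rw [firstHitProb]; positivity
  | succ m ih =>
    rw [firstHitProb]
    split_ifs
    · rfl
    · exact sum_nonneg fun y _ => mul_nonneg (hM x y) (ih y)

theorem firstHitProb_succ_le (hM : ∀ x y, 0 ≤ M x y) (hrow : ∀ x, ∑ y, M x y ≤ 1) {m : ℕ}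
    {c : ℝ} (hc : 0 ≤ c) (h : ∀ y, firstHitProb M j m y ≤ c) (x : ι) :
    firstHitProb M j (m + 1) x ≤ c := by
  rw [firstHitProb]
  split_ifs
  · exact hc
  · calc ∑ y, M x y * firstHitProb M j m y ≤ ∑ y, M x y * c :=
          sum_le_sum fun y _ => mul_le_mul_of_nonneg_left (h y) (hM x y)
      _ = (∑ y, M x y) * c := (sum_mul ..).symm
      _ ≤ c := mul_le_of_le_one_left hc (hrow x)

theorem firstHitProb_le_of_le (hM : ∀ x y, 0 ≤ M x y) (hrow : ∀ x, ∑ y, M x y ≤ 1)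
    {m N : ℕ} (hmN : m ≤ N) {c : ℝ} (hc : 0 ≤ c) (h : ∀ y, firstHitProb M j m y ≤ c) (x : ι) :
    firstHitProb M j N x ≤ c := by
  induction N, hmN using Nat.le_induction generalizing x with
  | base => exact h x
  | succ N _ ih => exact firstHitProb_succ_le hM hrow hc ih x

theorem firstHitProb_le_sum (hM : ∀ x y, 0 ≤ M x y) (hrow : ∀ x, ∑ y, M x y ≤ 1) {m N : ℕ}
    (hmN : m ≤ N) (x : ι) : firstHitProb M j N x ≤ ∑ y, firstHitProb M j m y :=
  firstHitProb_le_of_le hM hrow hmN (sum_nonneg fun y _ => firstHitProb_nonneg hM m y)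
    (fun y => single_le_sum (fun y _ => firstHitProb_nonneg hM m y) (mem_univ y)) x

theorem sum_range_firstHitProb_le_one (hM : ∀ x y, 0 ≤ M x y) (hrow : ∀ x, ∑ y, M x y ≤ 1)
    (N : ℕ) (x : ι) : ∑ m ∈ range N, firstHitProb M j m x ≤ 1 := by
  induction N generalizing x with
  | zero => simp
  | succ N ih =>
    rw [sum_range_succ']
    by_cases hx : x = j
    · simp [firstHitProb, hx]
    · calc ∑ m ∈ range N, firstHitProb M j (m + 1) x + firstHitProb M j 0 x
            = ∑ y, M x y * ∑ m ∈ range N, firstHitProb M j m y := by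
              simp only [firstHitProb, if_neg hx, add_zero, mul_sum]
              exact sum_comm
          _ ≤ ∑ y, M x y := sum_le_sum fun y _ => mul_le_of_le_one_right (hM x y) (ih y)
          _ ≤ 1 := hrow x

theorem firstHitProb_le_card_div (hM : ∀ x y, 0 ≤ M x y) (hrow : ∀ x, ∑ y, M x y ≤ 1)
    (N : ℕ) (x : ι) : firstHitProb M j N x ≤ Fintype.card ι / (N + 1) := by
  rw [le_div_iff₀ (by positivity), mul_comm]
  calc (N + 1 : ℝ) * firstHitProb M j N x = ∑ m ∈ range (N + 1), firstHitProb M j N x := by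
        simp
    _ ≤ ∑ m ∈ range (N + 1), ∑ y, firstHitProb M j m y :=
        sum_le_sum fun m hm => firstHitProb_le_sum hM hrow (mem_range_succ_iff.mp hm) x
    _ = ∑ y, ∑ m ∈ range (N + 1), firstHitProb M j m y := sum_comm
    _ ≤ ∑ _y : ι, 1 := sum_le_sum fun y _ => sum_range_firstHitProb_le_one hM hrow _ y
    _ = Fintype.card ι := by simp

end FirstHit

/-- Lemma 6: for a Markov chain started at state `i`, the probability that the
hitting time of state `j` equals `n` is at most `k / n` whenever `n > k`. -/
theorem hitting_time_bound (k n : ℕ) (hkn : k < n)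
    (M : Fin k → Fin k → ℝ) (hM : IsTransMat M) (i j : Fin k) :
    ∑ x ∈ Finset.univ.filter (fun x : Fin n → Fin k =>
        x ⟨0, by omega⟩ = i ∧ (∀ s : Fin n, s.1 < n - 1 → x s ≠ j) ∧
          x ⟨n - 1, by omega⟩ = j),
      ∏ t : Fin (n - 1),
        M (x ⟨t.1, by have := t.2; omega⟩) (x ⟨t.1 + 1, by have := t.2; omega⟩)
      ≤ (k : ℝ) / n := by
  obtain ⟨N, rfl⟩ : ∃ N, n = N + 1 := ⟨n - 1, by omega⟩
  calc _ = ∑ z ∈ univ.filter (fun z : Fin (N + 1) → Fin k =>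
          z 0 = i ∧ (∀ s : Fin N, z s.castSucc ≠ j) ∧ z (Fin.last N) = j),
        ∏ t : Fin N, M (z t.castSucc) (z t.succ) := by
        refine sum_congr (filter_congr fun z _ => ?_) fun z _ => rfl
        simp [Fin.forall_fin_succ', Fin.last]
    _ = firstHitProb M j N i := sum_firstHitPaths_eq_firstHitProb M j N i
    _ ≤ k / (N + 1 : ℕ) := by
        simpa using firstHitProb_le_card_div (fun x => (hM x).1) (fun x => (hM x).2.le) N i
end
end

section
/- Lemma 14 (f-divergence decreases when moving two coordinates closer): Let f:(0,∞)→ℝ be convex with f(1)=0. Let p_1, p_2, q_1, q_2 > 0 with p_1 > q_1 and p_2 < q_2, and let 0 ≤ d ≤ min{ p_1 − q_1, q_2 − p_2 }. Then q_1·f(p_1/q_1) + q_2·f(p_2/q_2) ≥ (q_1 + d)·f(p_1/(q_1+d)) + (q_2 − d)·f(p_2/(q_2−d)). -/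
/-!
For fixed `p > 0` the perspective `q ↦ q * f (p / q)` is convex on `(0, ∞)` and vanishes at
`q = p`, so moving `q` a fraction `s` of the way towards `p` scales the term by at most `1 - s`.
Each of the two terms therefore drops by at least `d * f (x) / (x - 1)`, with `x = p₁ / q₁` resp.
`x = p₂ / q₂`, and the two drops have nonnegative sum by the slope inequality for `f` around `1`.
-/

open Set

variable {f : ℝ → ℝ}

theorem ConvexOn.perspective (hf : ConvexOn ℝ (Ioi 0) f) {p : ℝ} (hp : 0 < p) :
    ConvexOn ℝ (Ioi 0) (fun q => q * f (p / q)) := by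
  refine ⟨convex_Ioi 0, fun q (hq : 0 < q) r (hr : 0 < r) a b ha hb hab => ?_⟩
  have hs : 0 < a * q + b * r := convex_Ioi (0 : ℝ) hq hr ha hb hab
  -- `p / (a q + b r)` is the convex combination of `p / q` and `p / r` with weights
  -- proportional to `a q` and `b r`.
  have key := hf.2 (div_pos hp hq) (div_pos hp hr) (div_nonneg (mul_nonneg ha hq.le) hs.le)
    (div_nonneg (mul_nonneg hb hr.le) hs.le) (by rw [← add_div, div_self hs.ne'])
  simp only [smul_eq_mul] at key ⊢
  rw [show a * q / (a * q + b * r) * (p / q) + b * r / (a * q + b * r) * (p / r)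
      = p / (a * q + b * r) by field_simp; linear_combination hab] at key
  calc (a * q + b * r) * f (p / (a * q + b * r))
      ≤ (a * q + b * r) * (a * q / (a * q + b * r) * f (p / q)
          + b * r / (a * q + b * r) * f (p / r)) := mul_le_mul_of_nonneg_left key hs.le
    _ = a * (q * f (p / q)) + b * (r * f (p / r)) := by field_simp

theorem ConvexOn.perspective_le_of_move_toward (hf : ConvexOn ℝ (Ioi 0) f) (hf1 : f 1 = 0)
    {p q s : ℝ} (hp : 0 < p) (hq : 0 < q) (hs0 : 0 ≤ s) (hs1 : s ≤ 1) :
    (q + s * (p - q)) * f (p / (q + s * (p - q))) ≤ (1 - s) * (q * f (p / q)) := by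
  have h := (hf.perspective hp).2 (mem_Ioi.2 hq) (mem_Ioi.2 hp) (sub_nonneg.2 hs1) hs0
    (by ring)
  simp only [smul_eq_mul, div_self hp.ne', hf1, mul_zero, add_zero] at h
  rwa [show (1 - s) * q + s * p = q + s * (p - q) by ring] at h

theorem ConvexOn.div_sub_one_add_div_one_sub_nonneg (hf : ConvexOn ℝ (Ioi 0) f) (hf1 : f 1 = 0)
    {x y : ℝ} (hy : 0 < y) (hy1 : y < 1) (hx1 : 1 < x) :
    0 ≤ f x / (x - 1) + f y / (1 - y) := by
  have h := hf.slope_mono_adjacent (mem_Ioi.2 hy) (mem_Ioi.2 (one_pos.trans hx1)) hy1 hx1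
  rw [hf1, zero_sub, neg_div, sub_zero] at h
  linarith

theorem fdiv_two_coordinate_monotone_general (f : ℝ → ℝ)
    (hconv : ConvexOn ℝ (Set.Ioi 0) f) (hf1 : f 1 = 0)
    (p1 p2 q1 q2 d : ℝ) (hp2 : 0 < p2) (hq1 : 0 < q1) (hq2 : 0 < q2)
    (h1 : q1 < p1) (h2 : p2 < q2) (hd0 : 0 ≤ d)
    (hd : d ≤ min (p1 - q1) (q2 - p2)) :
    (q1 + d) * f (p1 / (q1 + d)) + (q2 - d) * f (p2 / (q2 - d)) ≤
      q1 * f (p1 / q1) + q2 * f (p2 / q2) := by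
  have hpq1 : 0 < p1 - q1 := sub_pos.2 h1
  have hpq2 : 0 < q2 - p2 := sub_pos.2 h2
  have hA := hconv.perspective_le_of_move_toward hf1 (hq1.trans h1) hq1 (s := d / (p1 - q1))
    (by positivity) ((div_le_one hpq1).2 (hd.trans (min_le_left _ _)))
  have hB := hconv.perspective_le_of_move_toward hf1 hp2 hq2 (s := d / (q2 - p2))
    (by positivity) ((div_le_one hpq2).2 (hd.trans (min_le_right _ _)))
  rw [div_mul_cancel₀ _ hpq1.ne'] at hA
  rw [show d / (q2 - p2) * (p2 - q2) = -d by field_simp; ring, ← sub_eq_add_neg] at hB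
  have hslope := hconv.div_sub_one_add_div_one_sub_nonneg hf1 (div_pos hp2 hq2)
    ((div_lt_one hq2).2 h2) ((one_lt_div hq1).2 h1)
  have hdrop : d / (p1 - q1) * (q1 * f (p1 / q1)) + d / (q2 - p2) * (q2 * f (p2 / q2))
      = d * (f (p1 / q1) / (p1 / q1 - 1) + f (p2 / q2) / (1 - p2 / q2)) := by
    field_simp
  linarith [mul_nonneg hd0 hslope]

/-- Lemma 14: moving the second argument of an `f`-divergence term closer to the
first (in two coordinates) does not increase the sum of the two terms. -/
theorem fdiv_two_coordinate_monotone (f : ℝ → ℝ)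
    (hconv : ConvexOn ℝ (Set.Ioi 0) f) (hf1 : f 1 = 0)
    (p1 p2 q1 q2 d : ℝ) (hp1 : 0 < p1) (hp2 : 0 < p2) (hq1 : 0 < q1) (hq2 : 0 < q2)
    (h1 : q1 < p1) (h2 : p2 < q2) (hd0 : 0 ≤ d)
    (hd : d ≤ min (p1 - q1) (q2 - p2)) :
    (q1 + d) * f (p1 / (q1 + d)) + (q2 - d) * f (p2 / (q2 - d)) ≤
      q1 * f (p1 / q1) + q2 * f (p2 / q2) :=
  fdiv_two_coordinate_monotone_general f hconv hf1 p1 p2 q1 q2 d hp2 hq1 hq2 h1 h2 hd0 hd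
end

section
/- Lemma 17 (concentration of state-occupation counts): Let δ ∈ (0,1/k) and let (μ,M) ∈ 𝕄^k_δ with stationary distribution π. Let X^n be drawn from this chain and N_i = |{ t ∈ {1,…,n−1} : X_t = i }|. Define C(δ) = ⌈ −ln 4 / ln(1−δ) + 1 ⌉. Then for every i ∈ [k] and every t ≥ 0: Pr( |N_i − (n−1)·π_i| > t ) ≤ √(2/δ) · exp( −(t²/C(δ)) / ( 4·((n−1) + 2·C(δ)) + 40·t ) ). -/
open Filter Finset
open scoped ENNReal Classical

noncomputable section

def IsStationaryVec {k : ℕ} (M : Fin k → Fin k → ℝ) (pi : Fin k → ℝ) : Prop :=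
  IsProbVec pi ∧ ∀ j, ∑ i, pi i * M i j = pi j

/-- `N_i`: the number of (1-indexed) times `t ∈ {1, …, n-1}` with `x_t = i`. -/
def countState {k n : ℕ} (x : Fin n → Fin k) (i : Fin k) : ℕ :=
  (Finset.univ.filter (fun s : Fin n => s.1 < n - 1 ∧ x s = i)).card

/-- `C(δ) = ⌈ -ln 4 / ln (1-δ) + 1 ⌉`. -/
def Cdelta (δ : ℝ) : ℝ :=
  ((⌈-Real.log 4 / Real.log (1 - δ) + 1⌉ : ℤ) : ℝ)

/-!
Chernoff's method applied to `S = ∑_{s < n-1} f (X_s)` for `f = 1_{i} - π_i` and for `-f`.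
The exponential moment `E[exp (l S)]` is the total mass of the `(n-1)`-st iterate of the tilted
kernel `ν ↦ (ν · exp (l f)) M`. Split an iterate `v` into its mass `c = ∑ v` and its deviation
`w = v - c π`, measured in the χ²-norm `‖w‖² = ∑ w² / π`. Doeblin's condition `M ≥ δ` contracts
mass-zero vectors by `1 - δ` in this norm, while the tilt by a centred `f` changes the mass only
at order `l²` and couples mass and deviation at order `l`; hence the potential `c + (2l/3δ) ‖w‖`
grows by at most `1 + l²/(2δ)` per step and starts below `1/√δ`. Optimising over `l ≤ δ/9` and
using `C(δ) δ ≥ 1` gives `3/2` times the claimed exponent; the extra half pays for the two tails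
whenever the claimed bound is below `1`.
-/

open Real Matrix

section ChiNorm

variable {ι : Type*} [Fintype ι] {p : ι → ℝ}

def chiNorm (p g : ι → ℝ) : ℝ := √(∑ x, g x ^ 2 / p x)

lemma chiNorm_nonneg (p g : ι → ℝ) : 0 ≤ chiNorm p g := sqrt_nonneg _

lemma chiNorm_eq_norm (hp : ∀ x, 0 ≤ p x) (g : ι → ℝ) :
    chiNorm p g = ‖(WithLp.toLp 2 fun x => g x / √(p x) : EuclideanSpace ℝ ι)‖ := by
  simp [chiNorm, EuclideanSpace.norm_eq, div_pow, sq_sqrt (hp _)]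

lemma chiNorm_add_le (hp : ∀ x, 0 ≤ p x) (g h : ι → ℝ) :
    chiNorm p (g + h) ≤ chiNorm p g + chiNorm p h := by
  simp only [chiNorm_eq_norm hp, Pi.add_apply, add_div]
  exact norm_add_le (WithLp.toLp 2 fun x => g x / √(p x)) (WithLp.toLp 2 fun x => h x / √(p x))

lemma chiNorm_smul (hp : ∀ x, 0 ≤ p x) (c : ℝ) (g : ι → ℝ) :
    chiNorm p (c • g) = |c| * chiNorm p g := by
  simp only [chiNorm_eq_norm hp, Pi.smul_apply, smul_eq_mul, mul_div_assoc]
  exact norm_smul c (WithLp.toLp 2 fun x => g x / √(p x))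

lemma chiNorm_mul_le (hp : ∀ x, 0 ≤ p x) {E : ι → ℝ} {B : ℝ} (hB : 0 ≤ B)
    (hE : ∀ x, |E x| ≤ B) (g : ι → ℝ) : chiNorm p (g * E) ≤ B * chiNorm p g := by
  rw [chiNorm, chiNorm, ← sqrt_sq hB, ← sqrt_mul (sq_nonneg B), mul_sum]
  refine sqrt_le_sqrt (sum_le_sum fun x _ => ?_)
  rw [Pi.mul_apply, mul_pow, ← sq_abs (E x), mul_div_assoc', mul_comm]
  gcongr
  · exact hp x
  · exact hE x

lemma chiNorm_self_mul (hp : ∀ x, 0 < p x) (e : ι → ℝ) :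
    chiNorm p (p * e) = √(∑ x, p x * e x ^ 2) := by
  unfold chiNorm
  congr 1
  refine sum_congr rfl fun x _ => ?_
  rw [Pi.mul_apply]
  field_simp [(hp x).ne']

lemma chiNorm_self (hp : ∀ x, 0 < p x) (h1 : ∑ x, p x = 1) : chiNorm p p = 1 := by
  simpa [h1] using chiNorm_self_mul hp 1

lemma abs_sum_mul_le_chiNorm_mul (hp : ∀ x, 0 < p x) (g e : ι → ℝ) :
    |∑ x, g x * e x| ≤ chiNorm p g * √(∑ x, p x * e x ^ 2) := by
  rw [chiNorm, ← sqrt_mul (sum_nonneg fun x _ => div_nonneg (sq_nonneg _) (hp x).le)]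
  refine abs_le_sqrt (sum_sq_le_sum_mul_sum_of_sq_le_mul _
    (fun x _ => div_nonneg (sq_nonneg _) (hp x).le)
    (fun x _ => mul_nonneg (hp x).le (sq_nonneg _)) fun x _ => le_of_eq ?_)
  field_simp [(hp x).ne']

end ChiNorm

section Contraction

variable {k : ℕ} {M : Matrix (Fin k) (Fin k) ℝ} {p : Fin k → ℝ} {δ : ℝ}

lemma IsProbVec.le_one (hp : IsProbVec p) (y : Fin k) : p y ≤ 1 :=
  hp.2 ▸ single_le_sum (fun x _ => hp.1 x) (mem_univ y)

lemma IsStationaryVec.le_apply (hp : IsStationaryVec M p) (hδM : ∀ i j, δ ≤ M i j)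
    (y : Fin k) : δ ≤ p y :=
  calc δ = ∑ x, p x * δ := by rw [← sum_mul, hp.1.2, one_mul]
    _ ≤ ∑ x, p x * M x y := sum_le_sum fun x _ => mul_le_mul_of_nonneg_left (hδM x y) (hp.1.1 x)
    _ = p y := hp.2 y

lemma IsTransMat.card_mul_le_one (hM : IsTransMat M) (hδM : ∀ i j, δ ≤ M i j) (i : Fin k) :
    k * δ ≤ 1 :=
  calc k * δ = ∑ _j : Fin k, δ := by simp
    _ ≤ ∑ j, M i j := sum_le_sum fun j _ => hδM i j
    _ = 1 := (hM i).2

lemma IsTransMat.le_half (hM : IsTransMat M) (hδM : ∀ i j, δ ≤ M i j) (hk : 2 ≤ k) :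
    δ ≤ 1 / 2 := by
  have := hM.card_mul_le_one hδM ⟨0, by omega⟩
  have : (2 : ℝ) ≤ k := by exact_mod_cast hk
  nlinarith

lemma IsTransMat.sum_vecMul (hM : IsTransMat M) (v : Fin k → ℝ) :
    ∑ y, (v ᵥ* M) y = ∑ x, v x := by
  simp only [vecMul, dotProduct]
  rw [sum_comm]
  simp [← mul_sum, (hM _).2]

lemma sq_vecMul_le (hδM : ∀ i j, δ ≤ M i j) (hp : IsStationaryVec M p) (hp0 : ∀ x, 0 < p x)
    {g : Fin k → ℝ} (hg : ∑ x, g x = 0) (y : Fin k) :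
    (g ᵥ* M) y ^ 2 ≤ (∑ x, g x ^ 2 * (M x y - δ) / p x) * (p y - δ) := by
  have hMδ : ∀ x, 0 ≤ M x y - δ := fun x => sub_nonneg.2 (hδM x y)
  -- subtracting `δ` from the column is free because `g` has total mass zero
  have hcol : (g ᵥ* M) y = ∑ x, g x * (M x y - δ) := by
    simp only [vecMul, dotProduct, mul_sub, sum_sub_distrib, ← sum_mul, hg, zero_mul, sub_zero]
  have hmass : ∑ x, (M x y - δ) * p x = p y - δ := by
    simp only [sub_mul, sum_sub_distrib, ← mul_sum, hp.1.2, mul_one, mul_comm (M _ y), hp.2 y]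
  rw [hcol, ← hmass]
  refine sum_sq_le_sum_mul_sum_of_sq_le_mul _
    (fun x _ => div_nonneg (mul_nonneg (sq_nonneg _) (hMδ x)) (hp0 x).le)
    (fun x _ => mul_nonneg (hMδ x) (hp0 x).le) fun x _ => le_of_eq ?_
  field_simp [(hp0 x).ne']

lemma chiNorm_vecMul_le (hM : IsTransMat M) (hδ : 0 < δ) (hδM : ∀ i j, δ ≤ M i j)
    (hp : IsStationaryVec M p) {g : Fin k → ℝ} (hg : ∑ x, g x = 0) :
    chiNorm p (g ᵥ* M) ≤ (1 - δ) * chiNorm p g := by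
  have hp0 : ∀ x, 0 < p x := fun x => hδ.trans_le (hp.le_apply hδM x)
  have hk : 0 < k := Nat.pos_of_ne_zero (by rintro rfl; simpa using hp.1.2)
  have hkδ : k * δ ≤ 1 := hM.card_mul_le_one hδM ⟨0, hk⟩
  have hk1 : (1 : ℝ) ≤ k := by exact_mod_cast hk
  have hδ1 : 0 ≤ 1 - δ := by nlinarith
  have hrow : ∀ x, ∑ y, (M x y - δ) = 1 - k * δ := fun x => by
    simp [sum_sub_distrib, (hM x).2]
  rw [chiNorm, chiNorm, ← sqrt_sq hδ1, ← sqrt_mul (sq_nonneg _)]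
  refine sqrt_le_sqrt ?_
  calc ∑ y, (g ᵥ* M) y ^ 2 / p y
      ≤ ∑ y, (∑ x, g x ^ 2 * (M x y - δ) / p x) * (1 - δ) := by
        refine sum_le_sum fun y _ => ?_
        rw [div_le_iff₀ (hp0 y), mul_assoc]
        refine (sq_vecMul_le hδM hp hp0 hg y).trans (mul_le_mul_of_nonneg_left ?_
          (sum_nonneg fun x _ => div_nonneg (mul_nonneg (sq_nonneg _)
            (sub_nonneg.2 (hδM x y))) (hp0 x).le))
        nlinarith [hp.1.le_one y]
    _ = (1 - δ) * ∑ x, g x ^ 2 / p x * ∑ y, (M x y - δ) := by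
        simp_rw [mul_sum, sum_mul]
        rw [sum_comm]
        exact sum_congr rfl fun x _ => sum_congr rfl fun y _ => by ring
    _ = (1 - δ) * (1 - k * δ) * ∑ x, g x ^ 2 / p x := by
        simp only [hrow, ← sum_mul]
        ring
    _ ≤ (1 - δ) ^ 2 * ∑ x, g x ^ 2 / p x :=
        mul_le_mul_of_nonneg_right
          (by nlinarith [mul_nonneg hδ1 (mul_nonneg (sub_nonneg.2 hk1) hδ.le)])
          (sum_nonneg fun x _ => div_nonneg (sq_nonneg _) (hp0 x).le)

end Contraction

section Tilt

variable {k : ℕ} {p f : Fin k → ℝ} {l : ℝ}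

structure IsCenteredObservable (p f : Fin k → ℝ) : Prop where
  abs_le_one : ∀ x, |f x| ≤ 1
  mean_eq_zero : ∑ x, p x * f x = 0
  variance_le : ∑ x, p x * f x ^ 2 ≤ 1 / 4

lemma IsCenteredObservable.neg (hf : IsCenteredObservable p f) :
    IsCenteredObservable p (-f) where
  abs_le_one x := by simpa using hf.abs_le_one x
  mean_eq_zero := by simp [hf.mean_eq_zero]
  variance_le := by simpa using hf.variance_le

lemma abs_exp_sub_one_le {y : ℝ} (hy : |y| ≤ 1 / 18) : |exp y - 1| ≤ 19 / 18 * |y| := by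
  have h := abs_exp_sub_one_sub_id_le (hy.trans (by norm_num))
  calc |exp y - 1| ≤ |exp y - 1 - y| + |y| := by simpa using abs_add_le (exp y - 1 - y) y
    _ ≤ |y| ^ 2 + |y| := by rw [sq_abs]; linarith
    _ ≤ 19 / 18 * |y| := by nlinarith [abs_nonneg y]

lemma IsCenteredObservable.abs_mul_le (hf : IsCenteredObservable p f) (hl : 0 ≤ l) (x : Fin k) :
    |l * f x| ≤ l := by
  simpa [abs_mul, abs_of_nonneg hl] using mul_le_mul_of_nonneg_left (hf.abs_le_one x) hl

lemma IsCenteredObservable.exp_mul_le (hf : IsCenteredObservable p f) (hl : 0 ≤ l)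
    (hl' : l ≤ 1 / 18) (x : Fin k) : exp (l * f x) ≤ 1 + 19 / 18 * l := by
  have h := hf.abs_mul_le hl x
  have := abs_exp_sub_one_le (h.trans hl')
  linarith [le_abs_self (exp (l * f x) - 1)]

lemma IsCenteredObservable.abs_sum_mul_exp_sub_one_le (hp : IsProbVec p)
    (hf : IsCenteredObservable p f) (hl : 0 ≤ l) (hl' : l ≤ 1) :
    |∑ x, p x * exp (l * f x) - 1| ≤ l ^ 2 / 4 := by
  have hmean : ∑ x, p x * (1 + l * f x) = 1 := by
    simp [mul_add, sum_add_distrib, hp.2, mul_left_comm _ l, ← mul_sum, hf.mean_eq_zero]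
  have hlow : 1 ≤ ∑ x, p x * exp (l * f x) :=
    hmean ▸ sum_le_sum fun x _ => mul_le_mul_of_nonneg_left
      (by linarith [add_one_le_exp (l * f x)]) (hp.1 x)
  have hup : ∑ x, p x * exp (l * f x) ≤ 1 + l ^ 2 * ∑ x, p x * f x ^ 2 :=
    calc ∑ x, p x * exp (l * f x) ≤ ∑ x, (p x * (1 + l * f x) + l ^ 2 * (p x * f x ^ 2)) := by
          refine sum_le_sum fun x _ => ?_
          have h := abs_exp_sub_one_sub_id_le ((hf.abs_mul_le hl x).trans hl')
          nlinarith [le_abs_self (exp (l * f x) - 1 - l * f x), hp.1 x]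
      _ = 1 + l ^ 2 * ∑ x, p x * f x ^ 2 := by rw [sum_add_distrib, hmean, mul_sum]
  rw [abs_of_nonneg (by linarith)]
  nlinarith [hf.variance_le, sq_nonneg l]

lemma IsCenteredObservable.sum_mul_sq_exp_sub_one_le (hp : IsProbVec p)
    (hf : IsCenteredObservable p f) (hl : 0 ≤ l) (hl' : l ≤ 1 / 18) :
    ∑ x, p x * (exp (l * f x) - 1) ^ 2 ≤ (19 / 36 * l) ^ 2 :=
  calc ∑ x, p x * (exp (l * f x) - 1) ^ 2 ≤ ∑ x, (19 / 18 * l) ^ 2 * (p x * f x ^ 2) := by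
        refine sum_le_sum fun x _ => ?_
        have h := abs_exp_sub_one_le ((hf.abs_mul_le hl x).trans hl')
        rw [abs_mul, abs_of_nonneg hl] at h
        have h2 : (exp (l * f x) - 1) ^ 2 ≤ (19 / 18 * (l * |f x|)) ^ 2 := by
          rw [← sq_abs]; exact pow_le_pow_left₀ (abs_nonneg _) h 2
        calc p x * (exp (l * f x) - 1) ^ 2 ≤ p x * (19 / 18 * (l * |f x|)) ^ 2 :=
              mul_le_mul_of_nonneg_left h2 (hp.1 x)
          _ = _ := by rw [mul_pow, mul_pow, sq_abs]; ring
    _ ≤ (19 / 36 * l) ^ 2 := by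
        rw [← mul_sum]
        nlinarith [hf.variance_le, sq_nonneg l]

end Tilt

section Potential

variable {k : ℕ} {M : Matrix (Fin k) (Fin k) ℝ} {p E v : Fin k → ℝ} {δ a ε β θ G : ℝ}

def deviation (p v : Fin k → ℝ) : Fin k → ℝ := v - (∑ x, v x) • p

def potential (p : Fin k → ℝ) (θ : ℝ) (v : Fin k → ℝ) : ℝ :=
  ∑ x, v x + θ * chiNorm p (deviation p v)

lemma sum_deviation (hp : IsProbVec p) (v : Fin k → ℝ) : ∑ x, deviation p v x = 0 := by
  simp [deviation, sum_sub_distrib, ← mul_sum, hp.2]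

lemma vecMul_eq_smul_add_deviation (hp : IsStationaryVec M p) (v : Fin k → ℝ) :
    v ᵥ* M = (∑ x, v x) • p + deviation p v ᵥ* M := by
  have hpM : p ᵥ* M = p := funext hp.2
  rw [deviation, sub_vecMul, smul_vecMul, hpM, add_sub_cancel]

variable (hM : IsTransMat M) (hδ : 0 < δ) (hδM : ∀ i j, δ ≤ M i j) (hp : IsStationaryVec M p)
  (hEa : |∑ x, p x * E x - 1| ≤ a) (hEε : √(∑ x, p x * (E x - 1) ^ 2) ≤ ε)
include hM hδ hδM hp hEa hEε

lemma abs_sum_tilt_sub_le (hv : 0 ≤ ∑ x, v x) :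
    |∑ y, ((v ᵥ* M) * E) y - ∑ x, v x|
      ≤ a * ∑ x, v x + ε * ((1 - δ) * chiNorm p (deviation p v)) := by
  have hp0 : ∀ x, 0 < p x := fun x => hδ.trans_le (hp.le_apply hδM x)
  set w := deviation p v ᵥ* M
  have hw : ∑ y, w y = 0 := (hM.sum_vecMul _).trans (sum_deviation hp.1 v)
  -- the mass of `w` is zero, so only `E - 1` pairs with it
  have hsplit : ∑ y, ((v ᵥ* M) * E) y - ∑ x, v x
      = (∑ x, v x) * (∑ y, p y * E y - 1) + ∑ y, w y * (E y - 1) := by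
    simp only [vecMul_eq_smul_add_deviation hp v, Pi.mul_apply, Pi.add_apply, Pi.smul_apply,
      smul_eq_mul, mul_sub, sum_sub_distrib, mul_one, hw, add_mul, sum_add_distrib, mul_sum,
      mul_assoc]
    ring
  have hwb := chiNorm_vecMul_le hM hδ hδM hp (sum_deviation hp.1 v)
  have hpair : |∑ y, w y * (E y - 1)| ≤ (1 - δ) * chiNorm p (deviation p v) * ε :=
    (abs_sum_mul_le_chiNorm_mul hp0 _ _).trans
      (mul_le_mul hwb hEε (sqrt_nonneg _) ((chiNorm_nonneg _ _).trans hwb))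
  rw [hsplit]
  calc _ ≤ |(∑ x, v x) * (∑ y, p y * E y - 1)| + |∑ y, w y * (E y - 1)| := abs_add_le _ _
    _ ≤ _ := by
      rw [abs_mul, abs_of_nonneg hv]
      nlinarith [mul_le_mul_of_nonneg_left hEa hv]

lemma chiNorm_deviation_tilt_le (hβ : 0 ≤ β) (hEβ : ∀ x, |E x| ≤ β) (hv : 0 ≤ ∑ x, v x) :
    chiNorm p (deviation p ((v ᵥ* M) * E))
      ≤ (ε + a) * ∑ x, v x + (1 - δ) * (β + ε) * chiNorm p (deviation p v) := by
  have hp0 : ∀ x, 0 < p x := fun x => hδ.trans_le (hp.le_apply hδM x)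
  have hp0' : ∀ x, 0 ≤ p x := fun x => (hp0 x).le
  set c := ∑ x, v x
  set c' := ∑ y, ((v ᵥ* M) * E) y
  set w := deviation p v ᵥ* M
  have hwb := chiNorm_vecMul_le hM hδ hδM hp (sum_deviation hp.1 v)
  have hc := abs_sum_tilt_sub_le hM hδ hδM hp hEa hEε hv
  have hdecomp : deviation p ((v ᵥ* M) * E)
      = c • (p * fun x => E x - 1) + w * E + (c - c') • p := by
    funext x
    have hx : (v ᵥ* M) x = c * p x + w x := congrFun (vecMul_eq_smul_add_deviation hp v) x
    change (v ᵥ* M) x * E x - c' * p x = _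
    simp only [hx, Pi.add_apply, Pi.mul_apply, Pi.smul_apply, smul_eq_mul]
    ring
  calc chiNorm p (deviation p ((v ᵥ* M) * E))
      ≤ chiNorm p (c • (p * fun x => E x - 1)) + chiNorm p (w * E) + chiNorm p ((c - c') • p) := by
        rw [hdecomp]
        exact (chiNorm_add_le hp0' _ _).trans
          (add_le_add_left (chiNorm_add_le hp0' _ _) _)
    _ ≤ c * ε + β * ((1 - δ) * chiNorm p (deviation p v)) + |c' - c| := by
        rw [chiNorm_smul hp0', chiNorm_smul hp0', chiNorm_self_mul hp0, chiNorm_self hp0 hp.1.2,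
          abs_of_nonneg hv, mul_one, abs_sub_comm]
        gcongr
        exact (chiNorm_mul_le hp0' hβ hEβ w).trans (mul_le_mul_of_nonneg_left hwb hβ)
    _ ≤ _ := by nlinarith

lemma potential_tilt_le (hβ : 0 ≤ β) (hEβ : ∀ x, |E x| ≤ β) (hv : 0 ≤ ∑ x, v x) (hθ : 0 ≤ θ)
    (hGc : 1 + a + θ * (ε + a) ≤ G) (hGb : (1 - δ) * (ε + θ * (β + ε)) ≤ G * θ) :
    potential p θ ((v ᵥ* M) * E) ≤ G * potential p θ v := by
  have hc := abs_sum_tilt_sub_le hM hδ hδM hp hEa hEε hv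
  have hb := chiNorm_deviation_tilt_le hM hδ hδM hp hEa hEε hβ hEβ hv
  have hb0 := chiNorm_nonneg p (deviation p v)
  rw [potential, potential]
  nlinarith [le_abs_self (∑ y, ((v ᵥ* M) * E) y - ∑ x, v x), mul_le_mul_of_nonneg_left hb hθ,
    mul_le_mul_of_nonneg_right hGc hv, mul_le_mul_of_nonneg_right hGb hb0]

end Potential

section Paths

variable {k : ℕ}

def pathSum {n : ℕ} (f : Fin k → ℝ) (x : Fin n → Fin k) : ℝ :=
  ∑ s : Fin (n - 1), f (x (Fin.castLE (n.sub_le 1) s))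

def tiltedStep (M : Matrix (Fin k) (Fin k) ℝ) (E ν : Fin k → ℝ) : Fin k → ℝ := (ν * E) ᵥ* M

lemma sum_seqProb_mul_prod_succ (M : Matrix (Fin k) (Fin k) ℝ) (E μ : Fin k → ℝ) (m : ℕ) :
    ∑ x : Fin (m + 2) → Fin k,
        seqProb (m + 2) μ M x * ∏ s : Fin (m + 1), E (x (Fin.castLE (by omega) s))
      = ∑ x : Fin (m + 1) → Fin k,
        seqProb (m + 1) (tiltedStep M E μ) M x * ∏ s : Fin m, E (x (Fin.castLE (by omega) s)) := by
  rw [← (Fin.consEquiv fun _ => Fin k).sum_comp, Fintype.sum_prod_type, sum_comm]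
  refine sum_congr rfl fun x _ => ?_
  simp only [seqProb, dif_pos (Nat.succ_pos _), Fin.consEquiv_apply]
  change ∑ y, μ y * (∏ t : Fin (m + 1), _) * ∏ s : Fin (m + 1), _ = _
  simp only [Fin.prod_univ_succ, tiltedStep, vecMul, dotProduct, sum_mul]
  refine sum_congr rfl fun y _ => ?_
  change μ y * (M y (x ⟨0, by omega⟩) * ∏ t : Fin m, M (x ⟨t, by omega⟩) (x ⟨t + 1, by omega⟩))
      * (E y * ∏ s : Fin m, E (x (Fin.castLE (by omega) s)))
    = μ y * E y * M y (x ⟨0, by omega⟩) * (∏ t : Fin m, M (x ⟨t, by omega⟩) (x ⟨t + 1, by omega⟩))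
      * ∏ s : Fin m, E (x (Fin.castLE (by omega) s))
  ring

lemma sum_seqProb_mul_prod (M : Matrix (Fin k) (Fin k) ℝ) (E : Fin k → ℝ) {n : ℕ} (hn : 1 ≤ n)
    (μ : Fin k → ℝ) :
    ∑ x : Fin n → Fin k, seqProb n μ M x * ∏ s : Fin (n - 1), E (x (Fin.castLE (n.sub_le 1) s))
      = ∑ z, (tiltedStep M E)^[n - 1] μ z := by
  induction n, hn using Nat.le_induction generalizing μ with
  | base => simp [seqProb, ← (Equiv.funUnique (Fin 1) (Fin k)).symm.sum_comp]
  | succ n hn ih =>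
    obtain ⟨m, rfl⟩ : ∃ m, n = m + 1 := ⟨n - 1, by omega⟩
    exact (sum_seqProb_mul_prod_succ M E μ m).trans (ih _)

lemma iterate_tiltedStep_nonneg {M : Matrix (Fin k) (Fin k) ℝ} (hM : IsTransMat M)
    {E μ : Fin k → ℝ} (hE : ∀ x, 0 ≤ E x) (hμ : ∀ x, 0 ≤ μ x) (s : ℕ) (z : Fin k) :
    0 ≤ (tiltedStep M E)^[s] μ z := by
  induction s generalizing z with
  | zero => exact hμ z
  | succ s ih =>
    rw [Function.iterate_succ_apply']
    exact sum_nonneg (s := univ) fun y _ => mul_nonneg (mul_nonneg (ih y) (hE y)) ((hM y).1 z)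

lemma sum_iterate_succ_tiltedStep {M : Matrix (Fin k) (Fin k) ℝ} (hM : IsTransMat M)
    {E : Fin k → ℝ} (μ : Fin k → ℝ) (s : ℕ) :
    ∑ z, (tiltedStep M E)^[s + 1] μ z = ∑ x, ((tiltedStep M E)^[s] μ * E) x := by
  rw [Function.iterate_succ_apply']
  exact hM.sum_vecMul _

lemma sum_iterate_tiltedStep_one {M : Matrix (Fin k) (Fin k) ℝ} (hM : IsTransMat M) (j : ℕ)
    (ν : Fin k → ℝ) : ∑ z, (tiltedStep M 1)^[j] ν z = ∑ z, ν z := by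
  induction j generalizing ν with
  | zero => rfl
  | succ j ih => rw [Function.iterate_succ_apply, ih, tiltedStep, mul_one, hM.sum_vecMul]

lemma sum_seqProb {M : Matrix (Fin k) (Fin k) ℝ} (hM : IsTransMat M) {μ : Fin k → ℝ}
    (hμ : IsProbVec μ) {n : ℕ} (hn : 1 ≤ n) : ∑ x : Fin n → Fin k, seqProb n μ M x = 1 := by
  simpa [sum_iterate_tiltedStep_one hM, hμ.2] using sum_seqProb_mul_prod M 1 hn μ

lemma seqProb_nonneg {M : Matrix (Fin k) (Fin k) ℝ} (hM : IsTransMat M) {μ : Fin k → ℝ}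
    (hμ : ∀ x, 0 ≤ μ x) {n : ℕ} (x : Fin n → Fin k) : 0 ≤ seqProb n μ M x := by
  unfold seqProb
  split_ifs
  · exact mul_nonneg (hμ _) (prod_nonneg fun t _ => (hM _).1 _)
  · exact mul_nonneg zero_le_one (prod_nonneg fun t _ => (hM _).1 _)

end Paths

lemma sum_filter_lt_le_exp_mul_sum {α : Type*} [Fintype α] {P S : α → ℝ} (hP : ∀ x, 0 ≤ P x)
    {l : ℝ} (hl : 0 ≤ l) (t : ℝ) :
    ∑ x ∈ univ.filter (fun x => t < S x), P x ≤ exp (-(l * t)) * ∑ x, P x * exp (l * S x) := by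
  rw [mul_sum]
  calc ∑ x ∈ univ.filter (fun x => t < S x), P x
      ≤ ∑ x ∈ univ.filter (fun x => t < S x), exp (-(l * t)) * (P x * exp (l * S x)) := by
        refine sum_le_sum fun x hx => ?_
        have h : 1 ≤ exp (-(l * t)) * exp (l * S x) := by
          rw [← exp_add]
          exact one_le_exp (by nlinarith [(mem_filter.1 hx).2])
        nlinarith [hP x]
    _ ≤ _ := sum_le_sum_of_subset_of_nonneg (filter_subset _ _) fun x _ _ => by
        have := hP x
        positivity

section MGF

variable {k : ℕ} {M : Matrix (Fin k) (Fin k) ℝ} {p f μ E : Fin k → ℝ} {δ l β θ : ℝ}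

lemma chiNorm_mul_le_div_sqrt (hδ : 0 < δ) (hpδ : ∀ x, δ ≤ p x) (hμ : IsProbVec μ)
    (hβ : 0 ≤ β) (hE : ∀ x, |E x| ≤ β) : chiNorm p (μ * E) ≤ β / √δ := by
  have hE2 : ∀ x, E x ^ 2 ≤ β ^ 2 := fun x => by
    rw [← sq_abs]; exact pow_le_pow_left₀ (abs_nonneg _) (hE x) 2
  rw [chiNorm, ← sqrt_sq hβ, ← sqrt_div' _ hδ.le]
  refine sqrt_le_sqrt ((sum_le_sum fun x _ => ?_).trans_eq
    (by rw [← sum_div, ← sum_mul, hμ.2, one_mul]))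
  rw [Pi.mul_apply, mul_pow, div_le_div_iff₀ (hδ.trans_le (hpδ x)) hδ]
  have hμx : μ x ^ 2 ≤ μ x := by nlinarith [hμ.1 x, hμ.le_one x]
  calc μ x ^ 2 * E x ^ 2 * δ ≤ μ x * β ^ 2 * δ :=
        mul_le_mul_of_nonneg_right (mul_le_mul hμx (hE2 x) (sq_nonneg _) (hμ.1 x)) hδ.le
    _ ≤ μ x * β ^ 2 * p x := by gcongr; exacts [mul_nonneg (hμ.1 x) (sq_nonneg β), hpδ x]

lemma potential_mul_le (hp : IsProbVec p) (hδ : 0 < δ) (hpδ : ∀ x, δ ≤ p x) (hμ : IsProbVec μ)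
    (hβ : 0 ≤ β) (hE0 : ∀ x, 0 ≤ E x) (hEβ : ∀ x, E x ≤ β) (hθ : 0 ≤ θ) :
    potential p θ (μ * E) ≤ β + θ * (β / √δ + β) := by
  have hp0 : ∀ x, 0 ≤ p x := fun x => hδ.le.trans (hpδ x)
  have hc0 : 0 ≤ ∑ x, (μ * E) x := sum_nonneg fun x _ => mul_nonneg (hμ.1 x) (hE0 x)
  have hc : ∑ x, (μ * E) x ≤ β :=
    calc ∑ x, (μ * E) x ≤ ∑ x, μ x * β :=
          sum_le_sum fun x _ => mul_le_mul_of_nonneg_left (hEβ x) (hμ.1 x)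
      _ = β := by rw [← sum_mul, hμ.2, one_mul]
  have hdev : chiNorm p (deviation p (μ * E)) ≤ β / √δ + β := by
    rw [deviation, sub_eq_add_neg, ← neg_smul]
    refine (chiNorm_add_le hp0 _ _).trans (add_le_add
      (chiNorm_mul_le_div_sqrt hδ hpδ hμ hβ fun x => (abs_of_nonneg (hE0 x)).trans_le (hEβ x)) ?_)
    rw [chiNorm_smul hp0, chiNorm_self (fun x => hδ.trans_le (hpδ x)) hp.2, abs_neg,
      abs_of_nonneg hc0, mul_one]
    exact hc
  exact add_le_add hc (mul_le_mul_of_nonneg_left hdev hθ)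

/- The hypotheses of `potential_tilt_le` for the tilt bounds `a = l² / 4`, `ε = 19 l / 36`,
`β = 1 + 19 l / 18`, the weight `θ = 2 l / (3 δ)` and the growth factor `G = 1 + l² / (2 δ)`. -/
lemma tilt_coeffs_le (hδ : 0 < δ) (hδ2 : δ ≤ 1 / 2) (hl : 0 < l) (hl9 : l ≤ δ / 9) :
    1 + l ^ 2 / 4 + 2 / 3 * (l / δ) * (19 / 36 * l + l ^ 2 / 4) ≤ 1 + l ^ 2 / (2 * δ) ∧
      (1 - δ) * (19 / 36 * l + 2 / 3 * (l / δ) * ((1 + 19 / 18 * l) + 19 / 36 * l))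
        ≤ (1 + l ^ 2 / (2 * δ)) * (2 / 3 * (l / δ)) := by
  constructor
  · rw [← sub_nonneg]
    have e : 1 + l ^ 2 / (2 * δ) - (1 + l ^ 2 / 4 + 2 / 3 * (l / δ) * (19 / 36 * l + l ^ 2 / 4))
        = l ^ 2 * (1 / 2 - δ / 4 - 2 / 3 * (19 / 36 + l / 4)) / δ := by
      field_simp; ring
    rw [e]
    exact div_nonneg (mul_nonneg (sq_nonneg l) (by linarith)) hδ.le
  · rw [← sub_nonneg]
    have e : (1 + l ^ 2 / (2 * δ)) * (2 / 3 * (l / δ))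
        - (1 - δ) * (19 / 36 * l + 2 / 3 * (l / δ) * ((1 + 19 / 18 * l) + 19 / 36 * l))
        = l * (l ^ 2 / (3 * δ) + 2 / 3 - (1 - δ) * (19 / 36 * δ + 2 / 3 + 19 / 18 * l)) / δ := by
      field_simp; ring
    rw [e]
    refine div_nonneg (mul_nonneg hl.le ?_) hδ.le
    have h1 : (1 - δ) * (19 / 18 * l) ≤ (1 - δ) * (19 / 162 * δ) :=
      mul_le_mul_of_nonneg_left (by linarith) (by linarith)
    nlinarith [div_nonneg (sq_nonneg l) (by positivity : (0:ℝ) ≤ 3 * δ)]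

lemma initial_potential_le (hδ : 0 < δ) (hδ2 : δ ≤ 1 / 2) (hl : 0 < l) (hl9 : l ≤ δ / 9) :
    (1 + 19 / 18 * l) + 2 / 3 * (l / δ) * ((1 + 19 / 18 * l) / √δ + (1 + 19 / 18 * l))
      ≤ 1 / √δ := by
  have hs0 : 0 < √δ := sqrt_pos.2 hδ
  have hs : √δ ≤ 3 / 4 := by
    rw [show (3 / 4 : ℝ) = √((3 / 4) ^ 2) by rw [sqrt_sq (by norm_num)]]
    exact sqrt_le_sqrt (by linarith)
  have hθ : l / δ ≤ 1 / 9 := by rw [div_le_iff₀ hδ]; linarith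
  have hθ0 : 0 ≤ l / δ := by positivity
  set β := 1 + 19 / 18 * l with hβ_def
  have hβ : β ≤ 1 + 19 / 324 := by linarith
  rw [le_div_iff₀ hs0]
  have e : (β + 2 / 3 * (l / δ) * (β / √δ + β)) * √δ
      = β * √δ + 2 / 3 * (l / δ) * β + 2 / 3 * (l / δ) * β * √δ := by
    field_simp
    ring
  rw [e]
  nlinarith [mul_le_mul hθ hs hs0.le (by norm_num), mul_nonneg hθ0 hs0.le]

lemma sum_iterate_tiltedStep_le (hM : IsTransMat M) (hδ : 0 < δ) (hδ2 : δ ≤ 1 / 2)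
    (hδM : ∀ i j, δ ≤ M i j) (hp : IsStationaryVec M p) (hμ : IsProbVec μ)
    (hf : IsCenteredObservable p f) (hl : 0 < l) (hl9 : l ≤ δ / 9) (s : ℕ) :
    ∑ z, (tiltedStep M fun x => exp (l * f x))^[s + 1] μ z
      ≤ exp (s * (l ^ 2 / (2 * δ))) / √δ := by
  set E : Fin k → ℝ := fun x => exp (l * f x)
  set θ := 2 / 3 * (l / δ)
  set G := 1 + l ^ 2 / (2 * δ)
  set v : ℕ → Fin k → ℝ := fun s => (tiltedStep M E)^[s] μ * E
  have hl18 : l ≤ 1 / 18 := by linarith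
  have hθ : 0 ≤ θ := by positivity
  have hE0 : ∀ x, 0 ≤ E x := fun x => (exp_pos _).le
  have hEβ : ∀ x, |E x| ≤ 1 + 19 / 18 * l := fun x =>
    (abs_of_nonneg (hE0 x)).trans_le (hf.exp_mul_le hl.le hl18 x)
  have hEε : √(∑ x, p x * (E x - 1) ^ 2) ≤ 19 / 36 * l :=
    (sqrt_le_sqrt (hf.sum_mul_sq_exp_sub_one_le hp.1 hl.le hl18)).trans_eq
      (sqrt_sq (by positivity))
  have hv : ∀ s, 0 ≤ ∑ x, v s x := fun s =>
    sum_nonneg fun x _ => mul_nonneg (iterate_tiltedStep_nonneg hM hE0 hμ.1 s x) (hE0 x)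
  have hstep : ∀ s, potential p θ (v (s + 1)) ≤ G * potential p θ (v s) := fun s => by
    obtain ⟨hGc, hGb⟩ := tilt_coeffs_le hδ hδ2 hl hl9
    rw [show v (s + 1) = (v s ᵥ* M) * E by simp only [v, Function.iterate_succ_apply']; rfl]
    exact potential_tilt_le hM hδ hδM hp (hf.abs_sum_mul_exp_sub_one_le hp.1 hl.le (by linarith))
      hEε (by positivity) hEβ (hv s) hθ hGc hGb
  have hinit : potential p θ (v 0) ≤ 1 / √δ :=
    (potential_mul_le hp.1 hδ (hp.le_apply hδM) hμ (by positivity) hE0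
      (fun x => hf.exp_mul_le hl.le hl18 x) hθ).trans (initial_potential_le hδ hδ2 hl hl9)
  have hG : G ^ s ≤ exp (s * (l ^ 2 / (2 * δ))) := by
    rw [exp_nat_mul]
    exact pow_le_pow_left₀ (by positivity) (by linarith [add_one_le_exp (l ^ 2 / (2 * δ))]) s
  calc ∑ z, (tiltedStep M E)^[s + 1] μ z = ∑ x, v s x := sum_iterate_succ_tiltedStep hM μ s
    _ ≤ potential p θ (v s) := le_add_of_nonneg_right (mul_nonneg hθ (chiNorm_nonneg _ _))
    _ ≤ G ^ s * potential p θ (v 0) :=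
        le_geom (u := fun j => potential p θ (v j)) (by positivity) s fun j _ => hstep j
    _ ≤ G ^ s * (1 / √δ) := mul_le_mul_of_nonneg_left hinit (by positivity)
    _ ≤ exp (s * (l ^ 2 / (2 * δ))) / √δ := by
        rw [mul_one_div]
        exact div_le_div_of_nonneg_right hG (sqrt_nonneg _)

end MGF

section Counts

variable {k : ℕ} {p : Fin k → ℝ}

lemma IsProbVec.isCenteredObservable_indicator_sub (hp : IsProbVec p) (i : Fin k) :
    IsCenteredObservable p fun y => (if y = i then 1 else 0) - p i where
  abs_le_one y := by
    have := hp.1 i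
    have := hp.le_one i
    rw [abs_le]
    split_ifs <;> constructor <;> linarith
  mean_eq_zero := by
    simp [mul_sub, sum_sub_distrib, ← sum_mul, hp.2]
  variance_le := by
    have h : ∀ y, p y * ((if y = i then 1 else 0) - p i) ^ 2
        = (if y = i then p y else 0) * (1 - 2 * p i) + p i ^ 2 * p y := fun y => by
      split_ifs <;> ring
    simp only [h, sum_add_distrib, ← sum_mul, ← mul_sum, sum_ite_eq', mem_univ, if_true, hp.2]
    nlinarith [sq_nonneg (p i - 1 / 2)]

lemma pathSum_neg {n : ℕ} (f : Fin k → ℝ) (x : Fin n → Fin k) :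
    pathSum (-f) x = -pathSum f x := by
  simp [pathSum]

lemma countState_sub_eq_pathSum {m : ℕ} (x : Fin (m + 1) → Fin k) (i : Fin k) (c : ℝ) :
    (countState x i : ℝ) - m * c = pathSum (fun y => (if y = i then 1 else 0) - c) x := by
  have hcount : (countState x i : ℝ) = ∑ s : Fin m, if x s.castSucc = i then 1 else 0 := by
    rw [countState, card_filter, Nat.cast_sum, Fin.sum_univ_castSucc]
    simp
  change _ = ∑ s : Fin m, ((if x s.castSucc = i then 1 else 0) - c)
  simp [hcount, sum_sub_distrib]

end Counts

lemma sum_filter_lt_abs_le {α : Type*} [Fintype α] {P S : α → ℝ} (hP : ∀ x, 0 ≤ P x) (t : ℝ) :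
    ∑ x ∈ univ.filter (fun x => t < |S x|), P x
      ≤ ∑ x ∈ univ.filter (fun x => t < S x), P x + ∑ x ∈ univ.filter (fun x => t < -S x), P x := by
  simp only [sum_filter, ← sum_add_distrib]
  refine sum_le_sum fun x _ => ?_
  have := hP x
  have := lt_abs (a := t) (b := S x)
  split_ifs <;> first | linarith | tauto

section Tail

variable {k : ℕ} {M : Matrix (Fin k) (Fin k) ℝ} {p f μ : Fin k → ℝ} {δ l : ℝ}

lemma sum_filter_lt_pathSum_le (hM : IsTransMat M) (hδ : 0 < δ) (hδ2 : δ ≤ 1 / 2)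
    (hδM : ∀ i j, δ ≤ M i j) (hp : IsStationaryVec M p) (hμ : IsProbVec μ)
    (hf : IsCenteredObservable p f) (hl : 0 < l) (hl9 : l ≤ δ / 9) (m : ℕ) (t : ℝ) :
    ∑ x ∈ univ.filter (fun x : Fin (m + 2) → Fin k => t < pathSum f x), seqProb (m + 2) μ M x
      ≤ exp (-(l * t - m * (l ^ 2 / (2 * δ)))) / √δ := by
  have hmgf : ∑ x : Fin (m + 2) → Fin k, seqProb (m + 2) μ M x * exp (l * pathSum f x)
      = ∑ z, (tiltedStep M fun y => exp (l * f y))^[m + 1] μ z := by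
    refine Eq.trans ?_ (sum_seqProb_mul_prod M _ (n := m + 2) (by omega) μ)
    simp only [pathSum, mul_sum, exp_sum]
  calc _ ≤ exp (-(l * t)) *
        ∑ x : Fin (m + 2) → Fin k, seqProb (m + 2) μ M x * exp (l * pathSum f x) :=
        sum_filter_lt_le_exp_mul_sum (seqProb_nonneg hM hμ.1) hl.le t
    _ ≤ exp (-(l * t)) * (exp (m * (l ^ 2 / (2 * δ))) / √δ) := by
        rw [hmgf]
        exact mul_le_mul_of_nonneg_left
          (sum_iterate_tiltedStep_le hM hδ hδ2 hδM hp hμ hf hl hl9 m) (exp_pos _).le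
    _ = _ := by rw [mul_div_assoc', ← exp_add]; ring_nf

lemma sum_filter_lt_abs_countState_le (hM : IsTransMat M) (hδ : 0 < δ) (hδ2 : δ ≤ 1 / 2)
    (hδM : ∀ i j, δ ≤ M i j) (hp : IsStationaryVec M p) (hμ : IsProbVec μ) (i : Fin k)
    (hl : 0 < l) (hl9 : l ≤ δ / 9) {n : ℕ} (hn : 2 ≤ n) (t : ℝ) :
    ∑ x ∈ univ.filter (fun x : Fin n → Fin k => t < |(countState x i : ℝ) - ((n : ℝ) - 1) * p i|),
        seqProb n μ M x
      ≤ 2 * exp (-(l * t - ((n : ℝ) - 2) * (l ^ 2 / (2 * δ)))) / √δ := by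
  obtain ⟨m, rfl⟩ : ∃ m, n = m + 2 := ⟨n - 2, by omega⟩
  set f : Fin k → ℝ := fun y => (if y = i then 1 else 0) - p i
  have hf : IsCenteredObservable p f := hp.1.isCenteredObservable_indicator_sub i
  have hS : ∀ x : Fin (m + 2) → Fin k,
      (countState x i : ℝ) - (((m + 2 : ℕ) : ℝ) - 1) * p i = pathSum f x := fun x => by
    rw [← countState_sub_eq_pathSum]
    push_cast
    ring
  have hm : ((m + 2 : ℕ) : ℝ) - 2 = m := by push_cast; ring
  simp_rw [hS, hm]
  refine (sum_filter_lt_abs_le (seqProb_nonneg hM hμ.1) t).trans ?_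
  simp_rw [← pathSum_neg]
  have h1 := sum_filter_lt_pathSum_le hM hδ hδ2 hδM hp hμ hf hl hl9 m t
  have h2 := sum_filter_lt_pathSum_le hM hδ hδ2 hδM hp hμ hf.neg hl hl9 m t
  exact (add_le_add h1 h2).trans_eq (by ring)

end Tail

lemma one_le_Cdelta_mul {δ : ℝ} (hδ : 0 < δ) (hδ1 : δ < 1) : 1 ≤ Cdelta δ * δ := by
  have hL : 0 < -log (1 - δ) := neg_pos.2 (log_neg (by linarith) (by linarith))
  have hLδ : -log (1 - δ) * (1 - δ) ≤ δ := by
    have h := one_sub_inv_le_log_of_pos (x := 1 - δ) (by linarith)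
    have e : (1 - (1 - δ)⁻¹) * (1 - δ) = -δ := by
      rw [sub_mul, one_mul, inv_mul_cancel₀ (by linarith)]
      ring
    nlinarith [mul_le_mul_of_nonneg_right h (by linarith : (0:ℝ) ≤ 1 - δ)]
  have h4 : 1 ≤ log 4 := by
    rw [le_log_iff_exp_le (by norm_num)]
    linarith [exp_one_lt_d9]
  have hratio : (1 - δ) / δ ≤ -log 4 / log (1 - δ) := by
    rw [neg_div, ← div_neg, div_le_div_iff₀ hδ hL]
    nlinarith
  have hceil : -log 4 / log (1 - δ) + 1 ≤ Cdelta δ := Int.le_ceil _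
  have e : ((1 - δ) / δ + 1) * δ = 1 := by field_simp; ring
  nlinarith

lemma exists_tilt {δ C t N : ℝ} (hδ : 0 < δ) (hC : 1 ≤ C * δ) (ht : 0 < t) (hN : 1 ≤ N) :
    ∃ l, 0 < l ∧ l ≤ δ / 9 ∧
      3 / 2 * (t ^ 2 / C / (4 * (N + 2 * C) + 40 * t)) ≤ l * t - (N - 1) * (l ^ 2 / (2 * δ)) := by
  have hC0 : 0 < C := pos_of_mul_pos_left (one_pos.trans_le hC) hδ.le
  set D := 4 * (N + 2 * C) + 40 * t
  have hD : 0 < D := by positivity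
  have hT : ∀ X, 3 * t ^ 2 ≤ 2 * X * (C * D) → 3 / 2 * (t ^ 2 / C / D) ≤ X := fun X h => by
    rw [div_div, ← mul_div_assoc, div_le_iff₀ (by positivity)]
    linarith
  -- the unconstrained optimum `t δ / (N - 1)` if it is admissible, else the largest tilt `δ / 9`
  rcases le_or_gt (9 * t) (N - 1) with hbig | hsmall
  · have hm : 0 < N - 1 := by linarith
    refine ⟨t * δ / (N - 1), by positivity, ?_, hT _ ?_⟩
    · rw [div_le_div_iff₀ hm (by norm_num)]
      nlinarith
    · have e : 2 * (t * δ / (N - 1) * t - (N - 1) * ((t * δ / (N - 1)) ^ 2 / (2 * δ))) * (C * D)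
          = t ^ 2 * (C * δ) * D / (N - 1) := by field_simp; ring
      rw [e, le_div_iff₀ hm]
      nlinarith [mul_le_mul_of_nonneg_left hC (by positivity : (0:ℝ) ≤ t ^ 2 * D)]
  · refine ⟨δ / 9, by positivity, le_rfl, hT _ ?_⟩
    have e : 2 * (δ / 9 * t - (N - 1) * ((δ / 9) ^ 2 / (2 * δ))) * (C * D)
        = (C * δ) * D * (2 * t / 9 - (N - 1) / 81) := by field_simp; ring
    have hCD : 40 * t ≤ C * δ * D := by nlinarith
    rw [e]
    nlinarith [mul_le_mul hCD (by linarith : t / 9 ≤ 2 * t / 9 - (N - 1) / 81) (by positivity)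
      (by positivity)]

lemma two_mul_exp_neg_le {T X : ℝ} (hT : log 2 < T) (hX : 3 / 2 * T ≤ X) :
    2 * exp (-X) ≤ √2 * exp (-T) := by
  have hhalf : 2 * exp (-(T / 2)) ≤ √2 := by
    have h : exp (-T) < 1 / 2 := by
      rw [show (1 / 2 : ℝ) = exp (-log 2) by rw [exp_neg, exp_log two_pos, one_div]]
      exact exp_lt_exp.2 (by linarith)
    rw [le_sqrt (by positivity) (by norm_num), mul_pow, ← exp_nat_mul,
      show ((2 : ℕ) : ℝ) * -(T / 2) = -T by push_cast; ring]
    linarith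
  calc 2 * exp (-X) ≤ 2 * (exp (-(T / 2)) * exp (-T)) := by
        rw [← exp_add]
        gcongr
        linarith
    _ ≤ √2 * exp (-T) := by rw [← mul_assoc]; gcongr

lemma log_two_lt_of_sqrt_mul_exp_lt_one {δ T : ℝ} (hδ : 0 < δ) (hδ2 : δ ≤ 1 / 2)
    (h : √(2 / δ) * exp (-T) < 1) : log 2 < T := by
  have h2 : 2 ≤ √(2 / δ) :=
    (le_sqrt (by norm_num) (by positivity)).2 (by rw [le_div_iff₀ hδ]; linarith)
  have : exp (-T) < exp (-log 2) := by
    rw [exp_neg (log 2), exp_log two_pos]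
    nlinarith [exp_pos (-T)]
  linarith [exp_lt_exp.1 this]

theorem count_concentration_general (k n : ℕ) (hk2 : 2 ≤ k) (hn : 1 ≤ n)
    (δ : ℝ) (hδ0 : 0 < δ)
    (μ : Fin k → ℝ) (M : Fin k → Fin k → ℝ) (pi : Fin k → ℝ)
    (hμ : IsProbVec μ) (hM : IsTransMat M) (hpi : IsStationaryVec M pi)
    (hδM : ∀ i j, δ ≤ M i j) (i : Fin k) (t : ℝ) (ht : 0 ≤ t) :
    ∑ x ∈ Finset.univ.filter (fun x : Fin n → Fin k =>
        t < |(countState x i : ℝ) - ((n : ℝ) - 1) * pi i|),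
      seqProb n μ M x ≤
      Real.sqrt (2 / δ) *
        Real.exp (-(t ^ 2 / Cdelta δ) /
          (4 * (((n : ℝ) - 1) + 2 * Cdelta δ) + 40 * t)) := by
  have hδ2 : δ ≤ 1 / 2 := hM.le_half hδM hk2
  set T := t ^ 2 / Cdelta δ / (4 * ((n : ℝ) - 1 + 2 * Cdelta δ) + 40 * t) with hT_def
  rw [neg_div]
  rcases hn.eq_or_lt with rfl | hn2
  · rw [filter_false_of_mem fun x _ => by simp [countState, not_lt.2 ht], sum_empty]
    positivity
  rcases le_or_gt 1 (√(2 / δ) * exp (-T)) with hbig | hsmall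
  · exact (sum_le_sum_of_subset_of_nonneg (filter_subset _ _) fun x _ _ =>
      seqProb_nonneg hM hμ.1 x).trans ((sum_seqProb hM hμ hn).trans_le hbig)
  have hT : log 2 < T := log_two_lt_of_sqrt_mul_exp_lt_one hδ0 hδ2 hsmall
  have ht0 : 0 < t := ht.lt_of_ne fun h => by
    have hT0 : T = 0 := by simp [hT_def, ← h]
    linarith [log_pos one_lt_two]
  obtain ⟨l, hl, hl9, hX⟩ := exists_tilt (N := (n : ℝ) - 1) hδ0
    (one_le_Cdelta_mul hδ0 (by linarith)) ht0 (by norm_cast; omega)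
  calc _ ≤ 2 * exp (-(l * t - ((n : ℝ) - 2) * (l ^ 2 / (2 * δ)))) / √δ :=
        sum_filter_lt_abs_countState_le hM hδ0 hδ2 hδM hpi hμ i hl hl9 hn2 t
    _ ≤ √2 * exp (-T) / √δ := div_le_div_of_nonneg_right (two_mul_exp_neg_le hT
        (hX.trans_eq (by ring : _ = l * t - ((n : ℝ) - 2) * (l ^ 2 / (2 * δ))))) (sqrt_nonneg _)
    _ = √(2 / δ) * exp (-T) := by rw [sqrt_div' _ hδ0.le]; ring

/-- Lemma 17: concentration of the state-occupation counts `N_i` around `(n-1)·π_i`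
for chains in `𝕄^k_δ`. -/
theorem count_concentration (k n : ℕ) (hk2 : 2 ≤ k) (hn : 1 ≤ n)
    (δ : ℝ) (hδ0 : 0 < δ) (hδk : δ < 1 / k)
    (μ : Fin k → ℝ) (M : Fin k → Fin k → ℝ) (pi : Fin k → ℝ)
    (hμ : IsProbVec μ) (hM : IsTransMat M) (hpi : IsStationaryVec M pi)
    (hδM : ∀ i j, δ ≤ M i j) (i : Fin k) (t : ℝ) (ht : 0 ≤ t) :
    ∑ x ∈ Finset.univ.filter (fun x : Fin n → Fin k =>
        t < |(countState x i : ℝ) - ((n : ℝ) - 1) * pi i|),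
      seqProb n μ M x ≤
      Real.sqrt (2 / δ) *
        Real.exp (-(t ^ 2 / Cdelta δ) /
          (4 * (((n : ℝ) - 1) + 2 * Cdelta δ) + 40 * t)) :=
  count_concentration_general k n hk2 hn δ hδ0 μ M pi hμ hM hpi hδM i t ht
end
end
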